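/- arXiv:2302.00969 — 2 statements merged into one kernel-verified Lean document; each statement's English description precedes it below -/
import Mathlib

section
/- Let E be a Dedekind complete Riesz space with weak order unit and T a strictly positive conditional expectation operator on E = L^1(T). For all f, g in L^2(T), the Hölder-type inequality T|fg| ≤ ‖f‖_{T,2} ‖g‖_{T,2} holds, where ‖f‖_{T,2} = (T(f^2))^{1/2} computed in the f-algebra structure of the universal completion. -/
/-!
Common setup.  `E` models the universal completion `E_u` of the `T`-universally
complete Riesz space `L¹(T)`: a Dedekind complete (conditionally complete)
`f`-algebra whose multiplicative unit `1 = e = Te` is a weak order unit.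
`T : E → E` models the strictly positive conditional expectation operator,
`L1 ⊆ E` its natural domain `L¹(T)`, `L2 L1` the space `L²(T)` and `RT T` the
range `R(T)` of `T`.
-/

variable {E : Type*}

/-- The range `R(T)` of the conditional expectation operator. -/
def RT (T : E → E) : Set E := Set.range T

/-- `L²(T) = {f ∈ L¹(T) : f² ∈ L¹(T)}`, the product taken in the `f`-algebra `E_u`. -/
def L2 [Mul E] (L1 : Set E) : Set E := {f | f ∈ L1 ∧ f * f ∈ L1}

variable [CommRing E] [ConditionallyCompleteLattice E]

/-- `T` is a strictly positive conditional expectation operator on the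
`T`-universally complete space `L¹(T)` (modelled by the set `L1` inside the
Dedekind complete `f`-algebra `E`), with `1 = e = Te` a weak order unit. -/
structure IsCondExp (T : E → E) (L1 : Set E) : Prop where
  /-- compatibility of the order with addition -/
  addLe : ∀ a b c : E, a ≤ b → a + c ≤ b + c
  /-- products of positive elements are positive -/
  mulPos : ∀ a b : E, 0 ≤ a → 0 ≤ b → 0 ≤ a * b
  /-- the `f`-algebra property -/
  fAlg : ∀ a b c : E, a ⊓ b = 0 → 0 ≤ c → (c * a) ⊓ b = 0
  /-- `1 = e` is a weak order unit -/
  weakUnit : ∀ x : E, 0 ≤ x → x ⊓ 1 = 0 → x = 0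
  /-- `T` is additive -/
  addT : ∀ a b : E, T (a + b) = T a + T b
  /-- `T` is positive -/
  posT : ∀ a : E, 0 ≤ a → 0 ≤ T a
  /-- `T` is strictly positive -/
  strictT : ∀ a : E, 0 ≤ a → T a = 0 → a = 0
  /-- `T` is a projection -/
  projT : ∀ a : E, T (T a) = T a
  /-- `T` maps the weak order unit `e = 1` to itself -/
  unitT : T 1 = 1
  /-- `T` is an averaging operator: `T(T a · b) = T a · T b` -/
  avgT : ∀ a b : E, T (T a * b) = T a * T b
  /-- `T` is order continuous -/
  ordContT : ∀ S : Set E, S.Nonempty → DirectedOn (· ≥ ·) S → (∀ x ∈ S, 0 ≤ x) →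
      IsGLB S 0 → IsGLB (T '' S) 0
  /-- `L¹(T)` is closed under addition -/
  l1add : ∀ a ∈ L1, ∀ b ∈ L1, a + b ∈ L1
  /-- `L¹(T)` is solid -/
  l1sol : ∀ a ∈ L1, ∀ b : E, |b| ≤ |a| → b ∈ L1
  /-- `R(T) ⊆ L¹(T)` and `T` maps `L¹(T)` into itself -/
  rtL1 : ∀ a : E, T a ∈ L1
  /-- `L²(T)` is an `R(T)`-module -/
  l2mod : ∀ α ∈ RT T, ∀ x ∈ L2 L1, α * x ∈ L2 L1
  /-- `T`-universal completeness of `L¹(T)` -/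
  tuc : ∀ S : Set E, S.Nonempty → (∀ x ∈ S, 0 ≤ x ∧ x ∈ L1) → DirectedOn (· ≤ ·) S →
      BddAbove (T '' S) → BddAbove S ∧ sSup S ∈ L1

/-- `sqrt` is a square-root function on the positive cone of the `f`-algebra. -/
def IsSqrt (sqrt : E → E) : Prop := ∀ a : E, 0 ≤ a → 0 ≤ sqrt a ∧ sqrt a * sqrt a = a

/-- The `R(T)`-valued norm `‖f‖_{T,2} = (T (f²))^{1/2}` on `L²(T)`. -/
def nrm (T : E → E) (sqrt : E → E) (f : E) : E := sqrt (T (f * f))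

/-- A `T`-linear functional on `E = L²(T)`: `R(T)`-valued, additive,
`R(T)`-homogeneous and order bounded.  The set of these is the `T`-dual `E*`. -/
def TLinear (T : E → E) (L1 : Set E) (F : E → E) : Prop :=
  (∀ x ∈ L2 L1, F x ∈ RT T) ∧
  (∀ x ∈ L2 L1, ∀ y ∈ L2 L1, F (x + y) = F x + F y) ∧
  (∀ α ∈ RT T, ∀ x ∈ L2 L1, F (α * x) = α * F x) ∧
  (∀ x ∈ L2 L1, 0 ≤ x → ∃ b : E, ∀ y ∈ L2 L1, |y| ≤ x → |F y| ≤ b)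

/-- `T`-strong boundedness: `|F x| ≤ k ‖x‖_{T,2}` for some `k ∈ R(T)₊`. -/
def StronglyBdd (T : E → E) (L1 : Set E) (sqrt : E → E) (F : E → E) : Prop :=
  ∃ k ∈ RT T, 0 ≤ k ∧ ∀ x ∈ L2 L1, |F x| ≤ k * nrm T sqrt x

/-- Membership in the `T`-strong dual `Ê` of `L²(T)`. -/
def MemEhat (T : E → E) (L1 : Set E) (sqrt : E → E) (F : E → E) : Prop :=
  TLinear T L1 F ∧ StronglyBdd T L1 sqrt F

/-- The Riesz representation map `Ψ(f)(g) = T (f g)`. -/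
def Psi (T : E → E) (f : E) : E → E := fun g => T (f * g)

/-- The Riesz–Kantorovich set `{F y + G z : y, z ∈ L²(T)₊, y + z = x}` whose
supremum is `(F ∨ G)(x)` and whose infimum is `(F ∧ G)(x)`. -/
def RKset (L1 : Set E) (F G : E → E) (x : E) : Set E :=
  {v | ∃ y z : E, y ∈ L2 L1 ∧ z ∈ L2 L1 ∧ 0 ≤ y ∧ 0 ≤ z ∧ y + z = x ∧ v = F y + G z}

/-- The partial order on functionals: `F ≤ G` iff `F x ≤ G x` for all `x ∈ L²(T)₊`. -/
def leF [Mul E] (L1 : Set E) (F G : E → E) : Prop := ∀ x ∈ L2 L1, 0 ≤ x → F x ≤ G x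

/-!
Averaging lets elements of `R(T)` be pulled out of `T`, so with `c = T f²`, `d = T g²` and
`m = T(fg)` one gets `T((d f - m g)²) = d (d c - m²) ≥ 0` and symmetrically `c (c d - m²) ≥ 0`;
hence `(c + d)(m² - c d) ≤ 0`. Since `c + d` need not be invertible, this is finished with the
fact that a Dedekind complete unital `f`-algebra has no nonzero positive nilpotents: then
`a x ≤ 0` with `a ≥ 0` forces `a x⁺ = 0`, and `2m ≤ c + d` transfers this from `a = c + d` to
`m²`. Applied to `|f|, |g|` (using `|fg| ≤ |f||g|`), and with the same argument showing that
squaring reflects the order on the positive cone, this gives the inequality.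
-/

class IsFAlgebra (R : Type*) [CommRing R] [Lattice R] : Prop where
  mul_inf_eq_zero {a b c : R} : a ⊓ b = 0 → 0 ≤ c → (c * a) ⊓ b = 0

theorem nonpos_of_forall_nsmul_le {G : Type*} [AddCommGroup G] [ConditionallyCompleteLattice G]
    [IsOrderedAddMonoid G] {y b : G} (h : ∀ n : ℕ, n • y ≤ b) : y ≤ 0 := by
  set S := Set.range fun n : ℕ => n • y
  have hS : BddAbove S := ⟨b, by rintro _ ⟨n, rfl⟩; exact h n⟩
  have hshift : sSup S ≤ sSup S - y := by
    refine csSup_le (Set.range_nonempty _) ?_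
    rintro _ ⟨n, rfl⟩
    exact le_sub_iff_add_le.2 (succ_nsmul y n ▸ le_csSup hS ⟨n + 1, rfl⟩)
  simpa using hshift

theorem abs_mul_le_abs_mul_abs {R : Type*} [CommRing R] [Lattice R] [IsOrderedRing R]
    (a b : R) : |a * b| ≤ |a| * |b| := by
  have hpp := mul_nonneg (posPart_nonneg a) (posPart_nonneg b)
  have hpn := mul_nonneg (posPart_nonneg a) (negPart_nonneg b)
  have hnp := mul_nonneg (negPart_nonneg a) (posPart_nonneg b)
  have hnn := mul_nonneg (negPart_nonneg a) (negPart_nonneg b)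
  have hab : a * b = a⁺ * b⁺ + a⁻ * b⁻ - (a⁺ * b⁻ + a⁻ * b⁺) := by
    conv_lhs => rw [← posPart_sub_negPart a, ← posPart_sub_negPart b]
    ring
  have habs : |a| * |b| = a⁺ * b⁺ + a⁻ * b⁻ + (a⁺ * b⁻ + a⁻ * b⁺) := by
    rw [← posPart_add_negPart a, ← posPart_add_negPart b]
    ring
  rw [abs_le', hab, habs, neg_sub]
  constructor
  · exact (sub_le_self _ (add_nonneg hpn hnp)).trans (le_add_of_nonneg_right (add_nonneg hpn hnp))
  · exact (sub_le_self _ (add_nonneg hpp hnn)).trans (le_add_of_nonneg_left (add_nonneg hpp hnn))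

namespace IsFAlgebra

section Lattice

variable {R : Type*} [CommRing R] [Lattice R] [IsFAlgebra R]

theorem mul_eq_zero_of_inf_eq_zero {a b : R} (h : a ⊓ b = 0) : a * b = 0 := by
  have hba : b ⊓ (b * a) = 0 := by
    rw [inf_comm]; exact mul_inf_eq_zero h (h ▸ inf_le_right)
  have := mul_inf_eq_zero hba (h ▸ inf_le_left : 0 ≤ a)
  rw [mul_comm a b, inf_idem] at this
  rw [mul_comm, this]

theorem posPart_mul_negPart [IsOrderedAddMonoid R] (a : R) : a⁺ * a⁻ = 0 :=
  mul_eq_zero_of_inf_eq_zero (posPart_inf_negPart_eq_zero a)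

variable [IsOrderedRing R]

theorem posPart_mul_self (a : R) : a⁺ * a = a⁺ * a⁺ := by
  nth_rw 2 [← posPart_sub_negPart a]
  rw [mul_sub, posPart_mul_negPart, sub_zero]

theorem abs_mul_abs_self (a : R) : |a| * |a| = a * a := by
  conv_rhs => rw [← posPart_sub_negPart a]
  rw [← posPart_add_negPart a]
  linear_combination 4 * posPart_mul_negPart a

theorem mul_self_nonneg (a : R) : 0 ≤ a * a :=
  abs_mul_abs_self a ▸ mul_nonneg (abs_nonneg a) (abs_nonneg a)

end Lattice

section ConditionallyComplete

variable {R : Type*} [CommRing R] [ConditionallyCompleteLattice R] [IsOrderedRing R]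
  [IsFAlgebra R]

theorem eq_zero_of_mul_self_eq_zero {x : R} (hx : 0 ≤ x) (hxx : x * x = 0) : x = 0 := by
  refine le_antisymm (nonpos_of_forall_nsmul_le (b := 1) fun n => ?_) hx
  set y := n • x
  set p := (y - 1)⁺
  have hy : 0 ≤ y := nsmul_nonneg hx n
  have hpy : p ≤ y := (posPart_mono (sub_le_self y zero_le_one)).trans_eq (posPart_eq_self.2 hy)
  -- `p` kills `x`, hence `y`, so `p² = p (y - 1) = -p`.
  have hpx : p * x = 0 := by
    refine le_antisymm ?_ (mul_nonneg (posPart_nonneg _) hx)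
    calc p * x ≤ y * x := mul_le_mul_of_nonneg_right hpy hx
      _ = 0 := by rw [smul_mul_assoc, hxx, smul_zero]
  have hpp : p * p = -p := by
    rw [← posPart_mul_self, mul_sub, mul_one, mul_smul_comm, hpx, smul_zero, zero_sub]
  have hp : p = 0 :=
    le_antisymm (neg_nonneg.1 (hpp ▸ mul_self_nonneg p)) (posPart_nonneg _)
  exact sub_nonpos.1 (posPart_eq_zero.1 hp)

theorem mul_posPart_eq_zero_of_mul_nonpos {a x : R} (ha : 0 ≤ a) (h : a * x ≤ 0) :
    a * x⁺ = 0 := by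
  have hs := posPart_nonneg x
  have has : a * (x⁺ * x⁺) = 0 := by
    refine le_antisymm ?_ (mul_nonneg ha (mul_nonneg hs hs))
    calc a * (x⁺ * x⁺) = x⁺ * (a * x) := by rw [← posPart_mul_self]; ring
      _ ≤ 0 := mul_nonpos_of_nonneg_of_nonpos hs h
  refine eq_zero_of_mul_self_eq_zero (mul_nonneg ha hs) ?_
  calc a * x⁺ * (a * x⁺) = a * (a * (x⁺ * x⁺)) := by ring
    _ = 0 := by rw [has, mul_zero]

theorem nonpos_of_le_of_mul_posPart_eq_zero {x b : R} (hb : 0 ≤ b) (hxb : x ≤ b)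
    (h : b * x⁺ = 0) : x ≤ 0 := by
  have hs := posPart_nonneg x
  have hss : x⁺ * x⁺ = 0 := by
    refine le_antisymm ?_ (mul_nonneg hs hs)
    calc x⁺ * x⁺ ≤ b * x⁺ :=
          mul_le_mul_of_nonneg_right ((posPart_mono hxb).trans_eq (posPart_eq_self.2 hb)) hs
      _ = 0 := h
  exact posPart_eq_zero.1 (eq_zero_of_mul_self_eq_zero hs hss)

theorem le_of_mul_self_le_mul_self {u v : R} (hu : 0 ≤ u) (hv : 0 ≤ v) (h : u * u ≤ v * v) :
    u ≤ v := by
  have hab : (u + v) * (u - v) ≤ 0 := by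
    rw [show (u + v) * (u - v) = u * u - v * v by ring]
    exact sub_nonpos.2 h
  refine sub_nonpos.1 (nonpos_of_le_of_mul_posPart_eq_zero (add_nonneg hu hv) ?_
    (mul_posPart_eq_zero_of_mul_nonpos (add_nonneg hu hv) hab))
  exact (sub_le_self u hv).trans (le_add_of_nonneg_right hv)

theorem mul_self_le_mul_of_add_mul_nonpos {c d m : R} (hc : 0 ≤ c) (hd : 0 ≤ d) (hm : 0 ≤ m)
    (hmcd : m + m ≤ c + d) (h : (c + d) * (m * m - c * d) ≤ 0) : m * m ≤ c * d := by
  have hs := posPart_nonneg (m * m - c * d)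
  have hcds := mul_posPart_eq_zero_of_mul_nonpos (add_nonneg hc hd) h
  have hms : m * (m * m - c * d)⁺ = 0 := by
    refine le_antisymm ?_ (mul_nonneg hm hs)
    calc m * (m * m - c * d)⁺ ≤ (m + m) * (m * m - c * d)⁺ :=
          mul_le_mul_of_nonneg_right (le_add_of_nonneg_left hm) hs
      _ ≤ (c + d) * (m * m - c * d)⁺ := mul_le_mul_of_nonneg_right hmcd hs
      _ = 0 := hcds
  refine sub_nonpos.1 (nonpos_of_le_of_mul_posPart_eq_zero (mul_nonneg hm hm)
    (sub_le_self _ (mul_nonneg hc hd)) ?_)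
  rw [mul_assoc, hms, mul_zero]

end ConditionallyComplete

end IsFAlgebra

section AveragingOperator

variable {R : Type*} [CommRing R] [Lattice R] [IsOrderedRing R] [IsFAlgebra R] {T : R →+ R}

theorem map_mul_add_map_mul_le (hpos : ∀ a, 0 ≤ a → 0 ≤ T a) (f g : R) :
    T (f * g) + T (f * g) ≤ T (f * f) + T (g * g) := by
  have h := hpos _ (IsFAlgebra.mul_self_nonneg (f - g))
  rw [show (f - g) * (f - g) = f * f + g * g - (f * g + f * g) by ring, map_sub, map_add,
    map_add] at h
  exact sub_nonneg.1 h

theorem mul_map_mul_self_sub_nonneg (hpos : ∀ a, 0 ≤ a → 0 ≤ T a)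
    (havg : ∀ a b, T (T a * b) = T a * T b) (f g : R) :
    0 ≤ T (g * g) * (T (g * g) * T (f * f) - T (f * g) * T (f * g)) := by
  have h := hpos _ (IsFAlgebra.mul_self_nonneg (T (g * g) * f - T (f * g) * g))
  rw [show (T (g * g) * f - T (f * g) * g) * (T (g * g) * f - T (f * g) * g) =
      T (g * g) * (T (g * g) * (f * f)) - T (g * g) * (T (f * g) * (f * g)) -
        T (f * g) * (T (g * g) * (f * g)) + T (f * g) * (T (f * g) * (g * g)) by ring] at h
  simp only [map_add, map_sub, havg] at h
  exact h.trans_eq (by ring)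

end AveragingOperator

theorem map_mul_mul_self_le_of_nonneg {R : Type*} [CommRing R] [ConditionallyCompleteLattice R]
    [IsOrderedRing R] [IsFAlgebra R] {T : R →+ R} (hpos : ∀ a, 0 ≤ a → 0 ≤ T a)
    (havg : ∀ a b, T (T a * b) = T a * T b) {f g : R} (hf : 0 ≤ f) (hg : 0 ≤ g) :
    T (f * g) * T (f * g) ≤ T (f * f) * T (g * g) := by
  have hfg := mul_map_mul_self_sub_nonneg hpos havg f g
  have hgf := mul_map_mul_self_sub_nonneg hpos havg g f
  rw [mul_comm g f] at hgf
  refine IsFAlgebra.mul_self_le_mul_of_add_mul_nonpos (hpos _ (IsFAlgebra.mul_self_nonneg f))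
    (hpos _ (IsFAlgebra.mul_self_nonneg g)) (hpos _ (mul_nonneg hf hg))
    (map_mul_add_map_mul_le hpos f g) ?_
  calc (T (f * f) + T (g * g)) * (T (f * g) * T (f * g) - T (f * f) * T (g * g))
      = -(T (g * g) * (T (g * g) * T (f * f) - T (f * g) * T (f * g)) +
          T (f * f) * (T (f * f) * T (g * g) - T (f * g) * T (f * g))) := by ring
    _ ≤ 0 := neg_nonpos.2 (add_nonneg hfg hgf)

section IsCondExp

variable {T : E → E} {L1 : Set E}

theorem IsCondExp.isFAlgebra (hT : IsCondExp T L1) : IsFAlgebra E :=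
  ⟨hT.fAlg _ _ _⟩

theorem IsCondExp.isOrderedRing (hT : IsCondExp T L1) : IsOrderedRing E := by
  have : IsOrderedAddMonoid E := ⟨fun a b h c => hT.addLe a b c h, fun a b h c => by
    simpa only [add_comm c] using hT.addLe a b c h⟩
  have : ZeroLEOneClass E := by
    have := hT.isFAlgebra
    refine ⟨negPart_eq_zero.1 (le_antisymm ?_ (negPart_nonneg 1))⟩
    calc (1 : E)⁻ = (1⁺ - 1⁻) * 1⁻ := by rw [posPart_sub_negPart, one_mul]
      _ = -(1⁻ * 1⁻) := by rw [sub_mul, IsFAlgebra.posPart_mul_negPart, zero_sub]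
      _ ≤ 0 := neg_nonpos.2 (hT.mulPos _ _ (negPart_nonneg 1) (negPart_nonneg 1))
  exact IsOrderedRing.of_mul_nonneg hT.mulPos

end IsCondExp

theorem stmt2_general (T : E → E) (L1 : Set E) (hT : IsCondExp T L1)
    (sqrt : E → E) (hsqrt : IsSqrt sqrt)
    (f g : E) :
    T |f * g| ≤ nrm T sqrt f * nrm T sqrt g := by
  have := hT.isOrderedRing
  have := hT.isFAlgebra
  let τ : E →+ E := AddMonoidHom.mk' T hT.addT
  have hmono : Monotone τ := (monotone_iff_map_nonneg τ).2 hT.posT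
  obtain ⟨hc, hcc⟩ := hsqrt _ (hT.posT _ (IsFAlgebra.mul_self_nonneg f))
  obtain ⟨hd, hdd⟩ := hsqrt _ (hT.posT _ (IsFAlgebra.mul_self_nonneg g))
  have hcs : τ (|f| * |g|) * τ (|f| * |g|) ≤ τ (f * f) * τ (g * g) := by
    simpa only [IsFAlgebra.abs_mul_abs_self] using
      map_mul_mul_self_le_of_nonneg hT.posT hT.avgT (abs_nonneg f) (abs_nonneg g)
  calc T |f * g| ≤ τ (|f| * |g|) := hmono (abs_mul_le_abs_mul_abs f g)
    _ ≤ nrm T sqrt f * nrm T sqrt g := by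
      refine IsFAlgebra.le_of_mul_self_le_mul_self (hT.posT _ (mul_nonneg (abs_nonneg f)
        (abs_nonneg g))) (mul_nonneg hc hd) ?_
      rwa [nrm, nrm, mul_mul_mul_comm, hcc, hdd]

/-- The Hölder-type inequality
`T|fg| ≤ ‖f‖_{T,2} ‖g‖_{T,2}` for `f, g ∈ L²(T)`. -/
theorem stmt2 (T : E → E) (L1 : Set E) (hT : IsCondExp T L1)
    (sqrt : E → E) (hsqrt : IsSqrt sqrt)
    (f g : E) (hf : f ∈ L2 L1) (hg : g ∈ L2 L1) :
    T |f * g| ≤ nrm T sqrt f * nrm T sqrt g :=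
  stmt2_general T L1 hT sqrt hsqrt f g
end

section
/- Every T-strongly bounded T-linear functional on L^2(T) is order continuous; that is, Ê ⊆ E* ∩ L_n(E, R(T)). -/
/-!
Common setup.  `E` models the universal completion `E_u` of the `T`-universally
complete Riesz space `L¹(T)`: a Dedekind complete (conditionally complete)
`f`-algebra whose multiplicative unit `1 = e = Te` is a weak order unit.
`T : E → E` models the strictly positive conditional expectation operator,
`L1 ⊆ E` its natural domain `L¹(T)`, `L2 L1` the space `L²(T)` and `RT T` the
range `R(T)` of `T`.
-/

variable {E : Type*}

variable [CommRing E] [ConditionallyCompleteLattice E]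

/-! For `y ≤ x` in `S` we have `|F y| ≤ k ‖y‖_{T,2} ≤ k ‖x‖_{T,2}`, so it suffices that
`x ↦ k ‖x‖_{T,2}` decreases to `0` along `S`. In an Archimedean `f`-algebra multiplication by
a positive element preserves `S ↓ 0` (truncate the multiplier at level `n`); hence `x² ↓ 0`,
so `T (x²) ↓ 0` by order continuity of `T`, and then `‖x‖_{T,2} ↓ 0` because a positive lower
bound `w` of the norms has `w² ≤ T (x²)` for all `x`, so `w² = 0`, and the algebra is
semiprime. -/

section OrderedAddGroup

variable {α : Type*} [AddCommGroup α]

theorem le_zero_of_forall_nsmul_le [ConditionallyCompleteLattice α] [IsOrderedAddMonoid α]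
    {w z : α} (h : ∀ n : ℕ, n • w ≤ z) : w ≤ 0 := by
  set R := Set.range fun n : ℕ => n • w
  have hbdd : BddAbove R := ⟨z, Set.forall_mem_range.2 h⟩
  have hsup : sSup R ≤ sSup R - w :=
    csSup_le (Set.range_nonempty _) <| Set.forall_mem_range.2 fun n =>
      le_sub_iff_add_le.2 <| by simpa only [succ_nsmul] using le_csSup hbdd ⟨n + 1, rfl⟩
  exact (le_sub_self_iff _).1 hsup

theorem IsGLB.le_zero_of_forall_le_nsmul [PartialOrder α] [IsOrderedAddMonoid α] {S : Set α}
    (hS : IsGLB S 0) (hne : S.Nonempty) (hdir : DirectedOn (· ≥ ·) S) :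
    ∀ (n : ℕ) {c : α}, (∀ x ∈ S, c ≤ n • x) → c ≤ 0
  | 0, c, h => by
    obtain ⟨x, hx⟩ := hne
    simpa using h x hx
  | n + 1, c, h => hS.2 fun y hy => sub_nonpos.1 <|
      hS.le_zero_of_forall_le_nsmul hne hdir n fun x hx => by
        obtain ⟨z, hz, hzx, hzy⟩ := hdir x hx y hy
        calc c - y ≤ n • z + z - y := sub_le_sub_right (succ_nsmul z n ▸ h z hz) y
          _ ≤ n • x + y - y := sub_le_sub_right (add_le_add (nsmul_le_nsmul_right hzx n) hzy) y
          _ = n • x := add_sub_cancel_right _ _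

end OrderedAddGroup

def IsFAlgebra_s6 (A : Type*) [Mul A] [Zero A] [Lattice A] : Prop :=
  ∀ a b c : A, a ⊓ b = 0 → 0 ≤ c → (c * a) ⊓ b = 0

namespace IsFAlgebra_s6

variable {A : Type*} [CommRing A]

theorem mul_eq_zero_of_inf_eq_zero_s6 [Lattice A] (hf : IsFAlgebra_s6 A) {a b : A}
    (ha : 0 ≤ a) (hb : 0 ≤ b) (h : a ⊓ b = 0) : a * b = 0 := by
  have hba : (a * b) ⊓ a = 0 := hf b a a (inf_comm a b ▸ h) ha
  calc a * b = (b * a) ⊓ (a * b) := by rw [mul_comm b a, inf_idem]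
    _ = 0 := hf a (a * b) b (inf_comm (a * b) a ▸ hba) hb

theorem posPart_mul_self_s6 [Lattice A] [IsOrderedAddMonoid A] (hf : IsFAlgebra_s6 A) (a : A) :
    a⁺ * a = a⁺ * a⁺ := by
  have h := hf.mul_eq_zero_of_inf_eq_zero_s6 (posPart_nonneg a) (negPart_nonneg a)
    (posPart_inf_negPart_eq_zero a)
  calc a⁺ * a = a⁺ * (a⁺ - a⁻) := by rw [posPart_sub_negPart]
    _ = a⁺ * a⁺ := by rw [mul_sub, h, sub_zero]

theorem mul_self_nonneg_s6 [Lattice A] [IsOrderedAddMonoid A] (hf : IsFAlgebra_s6 A)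
    (hmul : ∀ a b : A, 0 ≤ a → 0 ≤ b → 0 ≤ a * b) (a : A) : 0 ≤ a * a := by
  have h := hf.mul_eq_zero_of_inf_eq_zero_s6 (posPart_nonneg a) (negPart_nonneg a)
    (posPart_inf_negPart_eq_zero a)
  have hsq : a * a = a⁺ * a⁺ + a⁻ * a⁻ := by
    conv_lhs => rw [← posPart_sub_negPart a]
    linear_combination (-2 : A) * h
  rw [hsq]
  exact add_nonneg (hmul _ _ (posPart_nonneg a) (posPart_nonneg a))
    (hmul _ _ (negPart_nonneg a) (negPart_nonneg a))

variable [ConditionallyCompleteLattice A] [IsOrderedRing A]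

theorem eq_zero_of_mul_self_eq_zero_s6 (hf : IsFAlgebra_s6 A)
    (hunit : ∀ x : A, 0 ≤ x → x ⊓ 1 = 0 → x = 0) {p : A} (hp : 0 ≤ p)
    (hpp : p * p = 0) : p = 0 := by
  set w := p ⊓ 1
  have hw : 0 ≤ w := le_inf hp zero_le_one
  have hww : w * w = 0 :=
    le_antisymm (hpp ▸ mul_le_mul inf_le_left inf_le_left hw hp) (mul_nonneg hw hw)
  -- `q := (n w - 1)⁺` satisfies `q * q = q * (n w - 1) = -q`, since `q * w ≤ n w * w = 0`
  have hnw : ∀ n : ℕ, n • w ≤ 1 := by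
    intro n
    set q := ((n : A) * w - 1)⁺
    have hq : 0 ≤ q := posPart_nonneg _
    have hqnw : q ≤ n * w := by
      calc q ≤ ((n : A) * w)⁺ := posPart_mono (sub_le_self _ zero_le_one)
        _ = n * w := posPart_eq_self.2 (mul_nonneg (Nat.cast_nonneg n) hw)
    have hqw : q * w = 0 := by
      refine le_antisymm ?_ (mul_nonneg hq hw)
      calc q * w ≤ n * w * w := mul_le_mul_of_nonneg_right hqnw hw
        _ = 0 := by rw [mul_assoc, hww, mul_zero]
    have hqq : q * q = -q := by
      rw [← hf.posPart_mul_self_s6, mul_sub, mul_one, mul_left_comm, hqw, mul_zero, zero_sub]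
    have hq0 : q = 0 := le_antisymm (neg_nonneg.1 (hqq ▸ mul_nonneg hq hq)) hq
    rw [nsmul_eq_mul]
    exact sub_nonpos.1 (posPart_eq_zero.1 hq0)
  exact hunit p hp (le_antisymm (le_zero_of_forall_nsmul_le hnw) hw)

theorem le_of_mul_self_le_mul_self_s6 (hf : IsFAlgebra_s6 A)
    (hunit : ∀ x : A, 0 ≤ x → x ⊓ 1 = 0 → x = 0) {s t : A} (hs : 0 ≤ s) (ht : 0 ≤ t)
    (h : s * s ≤ t * t) : s ≤ t := by
  set p := (s - t)⁺
  have hp : 0 ≤ p := posPart_nonneg _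
  have hpst : p ≤ s + t :=
    sup_le ((sub_le_self s ht).trans (le_add_of_nonneg_right ht)) (add_nonneg hs ht)
  -- `p * p * (s + t) = p * (s * s - t * t) ≤ 0` forces `p ^ 3 = 0`
  have hcube : p * p * p = 0 := by
    refine le_antisymm ?_ (mul_nonneg (mul_nonneg hp hp) hp)
    calc p * p * p ≤ p * p * (s + t) := mul_le_mul_of_nonneg_left hpst (mul_nonneg hp hp)
      _ = p * (s * s - t * t) := by rw [← hf.posPart_mul_self_s6]; ring
      _ ≤ 0 := mul_nonpos_of_nonneg_of_nonpos hp (sub_nonpos.2 h)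
  have hsq : p * p = 0 := hf.eq_zero_of_mul_self_eq_zero_s6 hunit (mul_nonneg hp hp) <| by
    rw [mul_assoc, ← mul_assoc p p p, hcube, mul_zero]
  exact sub_nonpos.1 (posPart_eq_zero.1 (hf.eq_zero_of_mul_self_eq_zero_s6 hunit hp hsq))

theorem isGLB_image_mul_left (hf : IsFAlgebra_s6 A) {a : A} (ha : 0 ≤ a) {S : Set A}
    (hne : S.Nonempty) (hdir : DirectedOn (· ≥ ·) S) (hS : IsGLB S 0) :
    IsGLB ((a * ·) '' S) 0 := by
  obtain ⟨x₀, hx₀⟩ := hne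
  have hpos : ∀ x ∈ S, 0 ≤ x := fun x hx => hS.1 hx
  refine ⟨Set.forall_mem_image.2 fun x hx => mul_nonneg ha (hpos x hx), fun c hc => ?_⟩
  set w := c ⊔ 0
  -- split `a ≤ (a - n)⁺ + n`: the bounded part `n` is killed by `S ↓ 0`
  have htrunc : ∀ n : ℕ, w ≤ (a - n)⁺ * x₀ := by
    intro n
    refine sub_nonpos.1 (hS.le_zero_of_forall_le_nsmul ⟨x₀, hx₀⟩ hdir n fun x hx => ?_)
    obtain ⟨z, hz, hzx, hzx₀⟩ := hdir x hx x₀ hx₀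
    rw [sub_le_iff_le_add', nsmul_eq_mul]
    calc w ≤ a * z := sup_le (hc ⟨z, hz, rfl⟩) (mul_nonneg ha (hpos z hz))
      _ ≤ ((a - n)⁺ + n) * z :=
          mul_le_mul_of_nonneg_right (sub_le_iff_le_add.1 (le_posPart _)) (hpos z hz)
      _ = (a - n)⁺ * z + n * z := add_mul _ _ _
      _ ≤ (a - n)⁺ * x₀ + n * x :=
          add_le_add (mul_le_mul_of_nonneg_left hzx₀ (posPart_nonneg _))
            (mul_le_mul_of_nonneg_left hzx (Nat.cast_nonneg n))
  -- `(a - n) * (a - n)⁺ = (a - n)⁺ * (a - n)⁺ ≥ 0`, so `n • w ≤ n (a - n)⁺ x₀ ≤ a² x₀`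
  have hnw : ∀ n : ℕ, n • w ≤ a * a * x₀ := by
    intro n
    have hr : (n : A) * (a - n)⁺ ≤ a * (a - n)⁺ := by
      rw [← sub_nonneg, ← sub_mul, mul_comm, hf.posPart_mul_self_s6]
      exact mul_nonneg (posPart_nonneg _) (posPart_nonneg _)
    have hra : (a - n)⁺ ≤ a :=
      (posPart_mono (sub_le_self _ (Nat.cast_nonneg n))).trans_eq (posPart_eq_self.2 ha)
    calc n • w = n * w := nsmul_eq_mul _ _
      _ ≤ n * ((a - n)⁺ * x₀) := mul_le_mul_of_nonneg_left (htrunc n) (Nat.cast_nonneg n)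
      _ = n * (a - n)⁺ * x₀ := (mul_assoc _ _ _).symm
      _ ≤ a * (a - n)⁺ * x₀ := mul_le_mul_of_nonneg_right hr (hpos x₀ hx₀)
      _ ≤ a * a * x₀ :=
          mul_le_mul_of_nonneg_right (mul_le_mul_of_nonneg_left hra ha) (hpos x₀ hx₀)
  exact le_sup_left.trans (le_zero_of_forall_nsmul_le hnw)

theorem isGLB_image_mul_self (hf : IsFAlgebra_s6 A) {S : Set A} (hne : S.Nonempty)
    (hdir : DirectedOn (· ≥ ·) S) (hS : IsGLB S 0) : IsGLB ((fun x => x * x) '' S) 0 := by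
  obtain ⟨x₀, hx₀⟩ := hne
  refine ⟨Set.forall_mem_image.2 fun x hx => mul_nonneg (hS.1 hx) (hS.1 hx), fun c hc => ?_⟩
  refine (hf.isGLB_image_mul_left (hS.1 hx₀) ⟨x₀, hx₀⟩ hdir hS).2 <|
    Set.forall_mem_image.2 fun x hx => ?_
  obtain ⟨z, hz, hzx, hzx₀⟩ := hdir x hx x₀ hx₀
  calc c ≤ z * z := hc ⟨z, hz, rfl⟩
    _ ≤ x₀ * x := mul_le_mul hzx₀ hzx (hS.1 hz) (hS.1 hx₀)

end IsFAlgebra_s6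

namespace IsCondExp

variable {T : E → E} {L1 : Set E}

theorem isOrderedAddMonoid (hT : IsCondExp T L1) : IsOrderedAddMonoid E :=
  ⟨fun a b h c => hT.addLe a b c h,
    fun a b h c => by simpa only [add_comm c] using hT.addLe a b c h⟩

theorem isFAlgebra_s6 (hT : IsCondExp T L1) : IsFAlgebra_s6 E := hT.fAlg

theorem isOrderedRing_s6 (hT : IsCondExp T L1) : IsOrderedRing E :=
  have := hT.isOrderedAddMonoid
  have : ZeroLEOneClass E := ⟨by simpa using hT.isFAlgebra_s6.mul_self_nonneg_s6 hT.mulPos 1⟩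
  .of_mul_nonneg hT.mulPos

theorem monotone (hT : IsCondExp T L1) : Monotone T := fun a b h => by
  have := hT.isOrderedAddMonoid
  simpa only [← hT.addT, add_sub_cancel] using
    le_add_of_nonneg_right (a := T a) (hT.posT _ (sub_nonneg.2 h))

variable {sqrt : E → E}

theorem nrm_nonneg (hT : IsCondExp T L1) (hsqrt : IsSqrt sqrt) {x : E} (hx : 0 ≤ x) :
    0 ≤ nrm T sqrt x :=
  have := hT.isOrderedRing_s6
  (hsqrt _ (hT.posT _ (mul_nonneg hx hx))).1

theorem nrm_mul_self (hT : IsCondExp T L1) (hsqrt : IsSqrt sqrt) {x : E} (hx : 0 ≤ x) :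
    nrm T sqrt x * nrm T sqrt x = T (x * x) :=
  have := hT.isOrderedRing_s6
  (hsqrt _ (hT.posT _ (mul_nonneg hx hx))).2

theorem nrm_mono (hT : IsCondExp T L1) (hsqrt : IsSqrt sqrt) {x y : E} (hy : 0 ≤ y)
    (hyx : y ≤ x) : nrm T sqrt y ≤ nrm T sqrt x := by
  have := hT.isOrderedRing_s6
  have hx := hy.trans hyx
  refine hT.isFAlgebra_s6.le_of_mul_self_le_mul_self_s6 hT.weakUnit (hT.nrm_nonneg hsqrt hy)
    (hT.nrm_nonneg hsqrt hx) ?_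
  rw [hT.nrm_mul_self hsqrt hy, hT.nrm_mul_self hsqrt hx]
  exact hT.monotone (mul_self_le_mul_self hy hyx)

theorem isGLB_image_nrm (hT : IsCondExp T L1) (hsqrt : IsSqrt sqrt) {S : Set E}
    (hne : S.Nonempty) (hdir : DirectedOn (· ≥ ·) S) (hS : IsGLB S 0) :
    IsGLB (nrm T sqrt '' S) 0 := by
  have := hT.isOrderedRing_s6
  have hsq := hT.isFAlgebra_s6.isGLB_image_mul_self hne hdir hS
  have hTsq : IsGLB (T '' ((fun x => x * x) '' S)) 0 :=
    hT.ordContT _ (hne.image _)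
      (directedOn_image.2 (hdir.mono' fun x _ y hy h => mul_self_le_mul_self (hS.1 hy) h))
      (fun x hx => hsq.1 hx) hsq
  refine ⟨Set.forall_mem_image.2 fun x hx => hT.nrm_nonneg hsqrt (hS.1 hx), fun c hc => ?_⟩
  set w := c ⊔ 0
  have hw : 0 ≤ w := le_sup_right
  have hww : w * w ≤ 0 := hTsq.2 <| by
    rintro _ ⟨_, ⟨x, hx, rfl⟩, rfl⟩
    rw [← hT.nrm_mul_self hsqrt (hS.1 hx)]
    exact mul_self_le_mul_self hw (sup_le (hc ⟨x, hx, rfl⟩) (hT.nrm_nonneg hsqrt (hS.1 hx)))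
  exact le_sup_left.trans
    (hT.isFAlgebra_s6.eq_zero_of_mul_self_eq_zero_s6 hT.weakUnit hw (hww.antisymm (mul_nonneg hw hw))).le

end IsCondExp

/-- Every `T`-strongly bounded `T`-linear functional `F ∈ Ê` is
order continuous: if `S ↓ 0` is a downward directed set of positives in `L²(T)`,
then the tail suprema of `|F|`-values exist and decrease to `0`. -/
theorem stmt6 (T : E → E) (L1 : Set E) (hT : IsCondExp T L1)
    (sqrt : E → E) (hsqrt : IsSqrt sqrt)
    (F : E → E) (hF : MemEhat T L1 sqrt F) :
    ∀ S : Set E, S.Nonempty → S ⊆ L2 L1 → (∀ x ∈ S, 0 ≤ x) → DirectedOn (· ≥ ·) S →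
      IsGLB S 0 →
      ∃ u : E → E,
        (∀ x ∈ S, IsLUB {v : E | ∃ y ∈ S, y ≤ x ∧ v = |F y|} (u x)) ∧
        IsGLB (u '' S) 0 := by
  intro S hne hSL2 hpos hdir hS
  have := hT.isOrderedRing_s6
  obtain ⟨⟨-, -, -, hFbdd⟩, k, -, hk, hFk⟩ := hF
  set V : E → Set E := fun x => {v : E | ∃ y ∈ S, y ≤ x ∧ v = |F y|}
  have hV : ∀ x ∈ S, IsLUB (V x) (sSup (V x)) := fun x hx => by
    obtain ⟨b, hb⟩ := hFbdd x (hSL2 hx) (hpos x hx)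
    refine isLUB_csSup ⟨|F x|, x, hx, le_rfl, rfl⟩ ⟨b, ?_⟩
    rintro _ ⟨y, hy, hyx, rfl⟩
    exact hb y (hSL2 hy) (by rwa [abs_of_nonneg (hpos y hy)])
  have hVk : ∀ x ∈ S, sSup (V x) ≤ k * nrm T sqrt x := fun x hx => (hV x hx).2 <| by
    rintro _ ⟨y, hy, hyx, rfl⟩
    exact (hFk y (hSL2 hy)).trans
      (mul_le_mul_of_nonneg_left (hT.nrm_mono hsqrt (hpos y hy) hyx) hk)
  have hknrm : IsGLB ((k * ·) '' (nrm T sqrt '' S)) 0 :=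
    hT.isFAlgebra_s6.isGLB_image_mul_left hk (hne.image _)
      (directedOn_image.2 (hdir.mono' fun x _ y hy h => hT.nrm_mono hsqrt (hpos y hy) h))
      (hT.isGLB_image_nrm hsqrt hne hdir hS)
  refine ⟨fun x => sSup (V x), hV, ⟨?_, fun c hc => hknrm.2 ?_⟩⟩
  · rintro _ ⟨x, hx, rfl⟩
    exact (abs_nonneg _).trans ((hV x hx).1 ⟨x, hx, le_rfl, rfl⟩)
  · rintro _ ⟨_, ⟨x, hx, rfl⟩, rfl⟩
    exact (hc ⟨x, hx, rfl⟩).trans (hVk x hx)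
end
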